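/- Let Ṡ = ∏_{j=1}^m X_j − p_1(1 + ∑_{j=1}^m μ_j^{-1}Ẋ_j) and Z = ∑_{j=1}^m ∏_{k≠j} X_k − p_1 s_1. Then E[Ṡ Z] = p_1 ∑_{j=1}^m ∏_{k≠j}(1+μ_k) − p_1²(s_1 + s_1² − s_2). -/

import Mathlib

open MeasureTheory ProbabilityTheory Finset
open scoped NNReal

/-- The law of `m` independent Poisson random variables `X_j ~ Poisson (μ j)`,
as a product measure on `Fin m → ℕ`. -/
noncomputable def poissonPi {m : ℕ} (μ : Fin m → ℝ≥0) : Measure (Fin m → ℕ) :=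
  Measure.pi fun j => poissonMeasure (μ j)

/-!
Under the product law, the expectation of a product of functions of distinct coordinates is the
product of their expectations, and the Poisson factorial moments are `E[X(X-1)⋯(X-k+1)] = μ^k`.
Since `E[Ṡ] = 0`, `E[Ṡ Z] = ∑_l E[Ṡ Y_l]` with `Y_l = ∏_{k≠l} X_k`, and `E[Ṡ Y_l]` is
`E[X_l ∏_{k≠l} X_k²] - p_1 E[Y_l] - p_1 ∑_j μ_j⁻¹ E[Ẋ_j Y_l]`, where `E[Ẋ_l Y_l] = 0` and
`E[Ẋ_j Y_l] = E[Ẋ_j X_j] ∏_{k≠j,l} μ_k = ∏_{k≠l} μ_k` for `j ≠ l`.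
-/

open scoped Nat

lemma natCast_sq_eq_descFactorial (n : ℕ) : (n : ℝ) ^ 2 = n.descFactorial 2 + n := by
  rw [Nat.cast_descFactorial_two]; ring

section PoissonMoments

open Real

lemma hasSum_poissonMeasure_descFactorial (r : ℝ≥0) (k : ℕ) :
    HasSum (fun n ↦ exp (-r) * r ^ n / n ! * (n.descFactorial k : ℝ)) ((r : ℝ) ^ k) := by
  rw [← hasSum_nat_add_iff' k]
  have hlow : ∑ n ∈ range k, exp (-r) * r ^ n / n ! * (n.descFactorial k : ℝ) = 0 :=
    sum_eq_zero fun n hn ↦ by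
      rw [Nat.descFactorial_eq_zero_iff_lt.mpr (mem_range.mp hn), Nat.cast_zero, mul_zero]
  rw [hlow, sub_zero]
  have hsum := (hasSum_one_poissonMeasure r).mul_left ((r : ℝ) ^ k)
  rw [mul_one] at hsum
  refine hsum.congr_fun fun n ↦ ?_
  have hfac : ((n + k)! : ℝ) = n ! * (n + k).descFactorial k := by
    rw [← Nat.cast_mul, ← Nat.factorial_mul_descFactorial (Nat.le_add_left k n),
      Nat.add_sub_cancel]
  rw [hfac, pow_add]
  field_simp

lemma integrable_descFactorial_poissonMeasure (r : ℝ≥0) (k : ℕ) :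
    Integrable (fun n : ℕ ↦ (n.descFactorial k : ℝ)) (poissonMeasure r) := by
  rw [integrable_poissonMeasure_iff]
  simpa only [Real.norm_natCast] using (hasSum_poissonMeasure_descFactorial r k).summable

lemma integral_descFactorial_poissonMeasure (r : ℝ≥0) (k : ℕ) :
    ∫ n, (n.descFactorial k : ℝ) ∂poissonMeasure r = (r : ℝ) ^ k := by
  rw [integral_poissonMeasure]
  exact (hasSum_poissonMeasure_descFactorial r k).tsum_eq

variable (r : ℝ≥0)

lemma integrable_natCast_poissonMeasure :
    Integrable (fun n : ℕ ↦ (n : ℝ)) (poissonMeasure r) := by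
  simpa using integrable_descFactorial_poissonMeasure r 1

lemma integral_natCast_poissonMeasure : ∫ n, (n : ℝ) ∂poissonMeasure r = r := by
  simpa using integral_descFactorial_poissonMeasure r 1

lemma integrable_natCast_sq_poissonMeasure :
    Integrable (fun n : ℕ ↦ (n : ℝ) ^ 2) (poissonMeasure r) := by
  simp_rw [natCast_sq_eq_descFactorial]
  exact (integrable_descFactorial_poissonMeasure r 2).add (integrable_natCast_poissonMeasure r)

lemma integral_natCast_sq_poissonMeasure :
    ∫ n, (n : ℝ) ^ 2 ∂poissonMeasure r = r + (r : ℝ) ^ 2 := by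
  simp_rw [natCast_sq_eq_descFactorial]
  rw [integral_add (integrable_descFactorial_poissonMeasure r 2)
      (integrable_natCast_poissonMeasure r),
    integral_descFactorial_poissonMeasure, integral_natCast_poissonMeasure, add_comm]

lemma integrable_natCast_sub_poissonMeasure (c : ℝ) :
    Integrable (fun n : ℕ ↦ (n : ℝ) - c) (poissonMeasure r) :=
  (integrable_natCast_poissonMeasure r).sub (integrable_const c)

lemma integrable_natCast_sub_mul_poissonMeasure (c : ℝ) :
    Integrable (fun n : ℕ ↦ ((n : ℝ) - c) * n) (poissonMeasure r) := by
  simp_rw [sub_mul, ← sq]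
  exact (integrable_natCast_sq_poissonMeasure r).sub
    ((integrable_natCast_poissonMeasure r).const_mul c)

lemma integral_natCast_sub_poissonMeasure : ∫ n, ((n : ℝ) - r) ∂poissonMeasure r = 0 := by
  rw [integral_sub (integrable_natCast_poissonMeasure r) (integrable_const _),
    integral_natCast_poissonMeasure, integral_const, probReal_univ, one_smul, sub_self]

lemma integral_natCast_sub_mul_poissonMeasure :
    ∫ n, ((n : ℝ) - r) * n ∂poissonMeasure r = r := by
  simp_rw [sub_mul, ← sq]
  rw [integral_sub (integrable_natCast_sq_poissonMeasure r)
    ((integrable_natCast_poissonMeasure r).const_mul _), integral_natCast_sq_poissonMeasure,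
    integral_const_mul, integral_natCast_poissonMeasure]
  ring

end PoissonMoments

section FinsetProdPi

lemma prod_insert_update {M ι : Type*} [CommMonoid M] [DecidableEq ι] {E : ι → Type*} {i : ι}
    {s : Finset ι} (hi : i ∉ s) (F : (i : ι) → E i → M) (g : E i → M) (x : (i : ι) → E i) :
    ∏ k ∈ insert i s, Function.update F i g k (x k) = g (x i) * ∏ k ∈ s, F k (x k) := by
  rw [prod_insert hi, Function.update_self]
  congr 1
  refine prod_congr rfl fun k hk ↦ ?_
  rw [Function.update_of_ne (ne_of_mem_of_not_mem hk hi)]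

variable {𝕜 ι : Type*} [RCLike 𝕜] [Fintype ι] {E : ι → Type*} [∀ i, MeasurableSpace (E i)]
  {ν : (i : ι) → Measure (E i)} [∀ i, IsProbabilityMeasure (ν i)]

theorem integrable_finsetProd_pi {s : Finset ι} {f : (i : ι) → E i → 𝕜}
    (hf : ∀ i ∈ s, Integrable (f i) (ν i)) :
    Integrable (fun x ↦ ∏ i ∈ s, f i (x i)) (Measure.pi ν) := by
  classical
  have h := Integrable.fintype_prod_dep (μ := ν) (f := fun i ↦ if i ∈ s then f i else 1)
    fun i ↦ by split_ifs with hi; exacts [hf i hi, integrable_const 1]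
  simpa only [ite_apply, Pi.one_apply, prod_ite_mem, univ_inter] using h

theorem integral_finsetProd_pi (s : Finset ι) (f : (i : ι) → E i → 𝕜) :
    ∫ x, ∏ i ∈ s, f i (x i) ∂Measure.pi ν = ∏ i ∈ s, ∫ y, f i y ∂ν i := by
  classical
  have h := integral_fintype_prod_eq_prod (μ := ν) fun i ↦ if i ∈ s then f i else 1
  have hint (i : ι) :
      ∫ y, (if i ∈ s then f i else 1) y ∂ν i = if i ∈ s then ∫ y, f i y ∂ν i else 1 := by
    split_ifs <;> simp
  rw [prod_congr rfl fun i _ ↦ hint i] at h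
  simpa only [ite_apply, Pi.one_apply, prod_ite_mem, univ_inter] using h

variable [DecidableEq ι] {i : ι} {s : Finset ι}

theorem integrable_mul_finsetProd_pi (hi : i ∉ s) {g : E i → 𝕜} {f : (i : ι) → E i → 𝕜}
    (hg : Integrable g (ν i)) (hf : ∀ k ∈ s, Integrable (f k) (ν k)) :
    Integrable (fun x ↦ g (x i) * ∏ k ∈ s, f k (x k)) (Measure.pi ν) := by
  have h := integrable_finsetProd_pi (ν := ν) (s := insert i s) (f := Function.update f i g)
    fun k hk ↦ by
      rcases mem_insert.mp hk with rfl | hk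
      · rwa [Function.update_self]
      · rw [Function.update_of_ne (ne_of_mem_of_not_mem hk hi)]; exact hf k hk
  simpa only [prod_insert_update hi] using h

theorem integral_mul_finsetProd_pi (hi : i ∉ s) (g : E i → 𝕜) (f : (i : ι) → E i → 𝕜) :
    ∫ x, g (x i) * ∏ k ∈ s, f k (x k) ∂Measure.pi ν
      = (∫ y, g y ∂ν i) * ∏ k ∈ s, ∫ y, f k y ∂ν k := by
  have h := integral_finsetProd_pi (ν := ν) (insert i s) (Function.update f i g)
  simp only [prod_insert_update hi] at h
  rw [h, prod_insert hi, Function.update_self]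
  congr 1
  refine prod_congr rfl fun k hk ↦ ?_
  rw [Function.update_of_ne (ne_of_mem_of_not_mem hk hi)]

end FinsetProdPi

lemma prod_mul_prod_erase_eq_mul_prod_erase_sq {ι M : Type*} [Fintype ι] [DecidableEq ι]
    [CommMonoid M] (a : ι → M) (l : ι) :
    (∏ i, a i) * ∏ i ∈ univ.erase l, a i = a l * ∏ i ∈ univ.erase l, a i ^ 2 := by
  rw [← mul_prod_erase univ a (mem_univ l), prod_pow, mul_assoc, sq]

lemma prod_mul_prod_erase_eq_sq_mul_inv {ι K : Type*} [Fintype ι] [DecidableEq ι] [Field K]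
    (a : ι → K) (l : ι) : (∏ i, a i) * ∏ i ∈ univ.erase l, a i = (∏ i, a i) ^ 2 * (a l)⁻¹ := by
  rcases eq_or_ne (a l) 0 with h | h
  · rw [prod_eq_zero (mem_univ l) h]; ring
  · rw [← mul_prod_erase univ a (mem_univ l)]; field_simp

namespace PoissonPi

variable {m : ℕ} (μ : Fin m → ℝ≥0)

noncomputable def sdot (x : Fin m → ℕ) : ℝ :=
  ∏ j, (x j : ℝ) - (∏ j, (μ j : ℝ)) * (1 + ∑ j, ((μ j : ℝ))⁻¹ * ((x j : ℝ) - (μ j : ℝ)))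

noncomputable def zStat (x : Fin m → ℕ) : ℝ :=
  ∑ j, ∏ k ∈ univ.erase j, (x k : ℝ) - (∏ j, (μ j : ℝ)) * ∑ j, ((μ j : ℝ))⁻¹

instance : IsProbabilityMeasure (poissonPi μ) := by
  unfold poissonPi; infer_instance

lemma integrable_prod : Integrable (fun x ↦ ∏ k, (x k : ℝ)) (poissonPi μ) :=
  integrable_finsetProd_pi fun k _ ↦ integrable_natCast_poissonMeasure (μ k)

lemma integral_prod : ∫ x, ∏ k, (x k : ℝ) ∂poissonPi μ = ∏ k, (μ k : ℝ) := by
  unfold poissonPi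
  simp_rw [integral_finsetProd_pi, integral_natCast_poissonMeasure]

lemma integrable_sub_coord (j : Fin m) :
    Integrable (fun x ↦ (x j : ℝ) - μ j) (poissonPi μ) := by
  unfold poissonPi
  simpa only [prod_singleton] using integrable_finsetProd_pi (ν := fun k ↦ poissonMeasure (μ k))
    (s := {j}) (f := fun _ n ↦ (n : ℝ) - μ j) fun k hk ↦ by
      rw [mem_singleton.mp hk]; exact integrable_natCast_sub_poissonMeasure _ _

lemma integral_sub_coord (j : Fin m) : ∫ x, ((x j : ℝ) - μ j) ∂poissonPi μ = 0 := by
  unfold poissonPi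
  simpa only [prod_singleton, integral_natCast_sub_poissonMeasure] using
    integral_finsetProd_pi (ν := fun k ↦ poissonMeasure (μ k)) {j} fun _ n ↦ (n : ℝ) - μ j

lemma integrable_sum_mul_sub_coord (c : Fin m → ℝ) :
    Integrable (fun x ↦ ∑ j, c j * ((x j : ℝ) - μ j)) (poissonPi μ) :=
  integrable_finsetSum _ fun j _ ↦ (integrable_sub_coord μ j).const_mul _

lemma integral_sum_mul_sub_coord (c : Fin m → ℝ) :
    ∫ x, ∑ j, c j * ((x j : ℝ) - μ j) ∂poissonPi μ = 0 := by
  rw [integral_finsetSum _ fun j _ ↦ (integrable_sub_coord μ j).const_mul _]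
  simp_rw [integral_const_mul, integral_sub_coord, mul_zero, sum_const_zero]

lemma integrable_one_add_sum_mul_sub_coord (c : Fin m → ℝ) :
    Integrable (fun x ↦ 1 + ∑ j, c j * ((x j : ℝ) - μ j)) (poissonPi μ) :=
  (integrable_const 1).add (integrable_sum_mul_sub_coord μ c)

lemma integrable_sdot : Integrable (sdot μ) (poissonPi μ) :=
  (integrable_prod μ).sub ((integrable_one_add_sum_mul_sub_coord μ _).const_mul _)

lemma integral_sdot : ∫ x, sdot μ x ∂poissonPi μ = 0 := by
  unfold sdot
  rw [integral_sub (integrable_prod μ) ((integrable_one_add_sum_mul_sub_coord μ _).const_mul _),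
    integral_const_mul, integral_add (integrable_const 1) (integrable_sum_mul_sub_coord μ _),
    integral_sum_mul_sub_coord, integral_prod]
  simp

lemma integrable_prod_erase (l : Fin m) :
    Integrable (fun x ↦ ∏ k ∈ univ.erase l, (x k : ℝ)) (poissonPi μ) :=
  integrable_finsetProd_pi fun k _ ↦ integrable_natCast_poissonMeasure (μ k)

lemma integral_prod_erase (l : Fin m) :
    ∫ x, ∏ k ∈ univ.erase l, (x k : ℝ) ∂poissonPi μ = ∏ k ∈ univ.erase l, (μ k : ℝ) := by
  unfold poissonPi
  simp_rw [integral_finsetProd_pi, integral_natCast_poissonMeasure]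

lemma integrable_prod_mul_prod_erase (l : Fin m) :
    Integrable (fun x ↦ (∏ k, (x k : ℝ)) * ∏ k ∈ univ.erase l, (x k : ℝ)) (poissonPi μ) := by
  simp_rw [prod_mul_prod_erase_eq_mul_prod_erase_sq]
  exact integrable_mul_finsetProd_pi (notMem_erase l univ) (integrable_natCast_poissonMeasure _)
    fun k _ ↦ integrable_natCast_sq_poissonMeasure (μ k)

lemma integral_prod_mul_prod_erase (l : Fin m) :
    ∫ x, (∏ k, (x k : ℝ)) * ∏ k ∈ univ.erase l, (x k : ℝ) ∂poissonPi μ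
      = (∏ k, (μ k : ℝ)) * ∏ k ∈ univ.erase l, (1 + (μ k : ℝ)) := by
  unfold poissonPi
  simp_rw [prod_mul_prod_erase_eq_mul_prod_erase_sq]
  rw [integral_mul_finsetProd_pi (ν := fun k ↦ poissonMeasure (μ k)) (notMem_erase l univ)
    (fun n : ℕ ↦ (n : ℝ)) fun _ n ↦ (n : ℝ) ^ 2]
  simp_rw [integral_natCast_poissonMeasure, integral_natCast_sq_poissonMeasure]
  rw [← mul_prod_erase univ _ (mem_univ l), mul_assoc, ← prod_mul_distrib]
  congr 1
  exact prod_congr rfl fun k _ ↦ by ring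

lemma sub_mul_prod_erase_of_ne (x : Fin m → ℕ) {j l : Fin m} (hjl : j ≠ l) :
    ((x j : ℝ) - μ j) * ∏ k ∈ univ.erase l, (x k : ℝ)
      = ((x j : ℝ) - μ j) * x j * ∏ k ∈ (univ.erase l).erase j, (x k : ℝ) := by
  rw [mul_assoc, mul_prod_erase _ (fun k ↦ (x k : ℝ)) (mem_erase.mpr ⟨hjl, mem_univ j⟩)]

lemma integrable_sub_mul_prod_erase (j l : Fin m) :
    Integrable (fun x ↦ ((x j : ℝ) - μ j) * ∏ k ∈ univ.erase l, (x k : ℝ)) (poissonPi μ) := by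
  rcases eq_or_ne j l with rfl | hjl
  · exact integrable_mul_finsetProd_pi (notMem_erase j univ)
      (integrable_natCast_sub_poissonMeasure _ _) fun k _ ↦ integrable_natCast_poissonMeasure (μ k)
  · simp_rw [sub_mul_prod_erase_of_ne μ _ hjl]
    exact integrable_mul_finsetProd_pi (notMem_erase j _)
      (integrable_natCast_sub_mul_poissonMeasure _ _)
      fun k _ ↦ integrable_natCast_poissonMeasure (μ k)

lemma integral_sub_mul_prod_erase (j l : Fin m) :
    ∫ x, ((x j : ℝ) - μ j) * ∏ k ∈ univ.erase l, (x k : ℝ) ∂poissonPi μ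
      = if j = l then 0 else ∏ k ∈ univ.erase l, (μ k : ℝ) := by
  unfold poissonPi
  rcases eq_or_ne j l with rfl | hjl
  · rw [if_pos rfl, integral_mul_finsetProd_pi (ν := fun k ↦ poissonMeasure (μ k))
      (notMem_erase j univ) (fun n : ℕ ↦ (n : ℝ) - μ j) fun _ n ↦ (n : ℝ),
      integral_natCast_sub_poissonMeasure, zero_mul]
  · simp_rw [if_neg hjl, sub_mul_prod_erase_of_ne μ _ hjl]
    rw [integral_mul_finsetProd_pi (ν := fun k ↦ poissonMeasure (μ k)) (notMem_erase j _)
      (fun n : ℕ ↦ ((n : ℝ) - μ j) * n) fun _ n ↦ (n : ℝ),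
      integral_natCast_sub_mul_poissonMeasure]
    simp_rw [integral_natCast_poissonMeasure]
    exact mul_prod_erase _ (fun k ↦ (μ k : ℝ)) (mem_erase.mpr ⟨hjl, mem_univ j⟩)

lemma sdot_mul_prod_erase (x : Fin m → ℕ) (l : Fin m) :
    sdot μ x * ∏ k ∈ univ.erase l, (x k : ℝ)
      = (∏ k, (x k : ℝ)) * ∏ k ∈ univ.erase l, (x k : ℝ)
        - (∏ j, (μ j : ℝ)) * ∏ k ∈ univ.erase l, (x k : ℝ)
        - (∏ j, (μ j : ℝ)) * ∑ j, ((μ j : ℝ))⁻¹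
            * (((x j : ℝ) - μ j) * ∏ k ∈ univ.erase l, (x k : ℝ)) := by
  have hsum : ∑ j, ((μ j : ℝ))⁻¹ * (((x j : ℝ) - μ j) * ∏ k ∈ univ.erase l, (x k : ℝ))
      = (∑ j, ((μ j : ℝ))⁻¹ * ((x j : ℝ) - μ j)) * ∏ k ∈ univ.erase l, (x k : ℝ) := by
    rw [sum_mul]; exact sum_congr rfl fun j _ ↦ by ring
  rw [sdot, hsum]
  ring

lemma integrable_sdot_mul_prod_erase (l : Fin m) :
    Integrable (fun x ↦ sdot μ x * ∏ k ∈ univ.erase l, (x k : ℝ)) (poissonPi μ) := by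
  simp_rw [sdot_mul_prod_erase]
  exact ((integrable_prod_mul_prod_erase μ l).sub' ((integrable_prod_erase μ l).const_mul _)).sub'
    ((integrable_finsetSum _ fun j _ ↦
      (integrable_sub_mul_prod_erase μ j l).const_mul _).const_mul _)

lemma integral_sdot_mul_prod_erase (l : Fin m) :
    ∫ x, sdot μ x * ∏ k ∈ univ.erase l, (x k : ℝ) ∂poissonPi μ
      = (∏ k, (μ k : ℝ)) * ∏ k ∈ univ.erase l, (1 + (μ k : ℝ))
        - (∏ k, (μ k : ℝ)) * (∏ k ∈ univ.erase l, (μ k : ℝ))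
          * (1 + ∑ j ∈ univ.erase l, ((μ j : ℝ))⁻¹) := by
  have hPY := integrable_prod_mul_prod_erase μ l
  have hY := (integrable_prod_erase μ l).const_mul (∏ j, (μ j : ℝ))
  have hXY (j : Fin m) := (integrable_sub_mul_prod_erase μ j l).const_mul ((μ j : ℝ))⁻¹
  simp_rw [sdot_mul_prod_erase]
  rw [integral_sub (hPY.sub' hY) ((integrable_finsetSum univ fun j _ ↦ hXY j).const_mul _),
    integral_sub hPY hY, integral_const_mul, integral_const_mul,
    integral_finsetSum _ fun j _ ↦ hXY j]
  simp_rw [integral_const_mul, integral_sub_mul_prod_erase, integral_prod_mul_prod_erase,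
    integral_prod_erase]
  simp only [mul_ite, mul_zero, sum_ite, filter_ne', sum_const_zero, zero_add, ← sum_mul]
  ring

lemma integral_sdot_mul_zStat :
    ∫ x, sdot μ x * zStat μ x ∂poissonPi μ
      = ∑ l, ∫ x, sdot μ x * ∏ k ∈ univ.erase l, (x k : ℝ) ∂poissonPi μ := by
  have hpt (x : Fin m → ℕ) : sdot μ x * zStat μ x
      = ∑ l, sdot μ x * ∏ k ∈ univ.erase l, (x k : ℝ)
        - (∏ j, (μ j : ℝ)) * (∑ j, ((μ j : ℝ))⁻¹) * sdot μ x := by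
    rw [zStat, mul_sub, mul_sum]; ring
  have hSY (l : Fin m) := integrable_sdot_mul_prod_erase μ l
  simp_rw [hpt]
  rw [integral_sub (integrable_finsetSum _ fun l _ ↦ hSY l) ((integrable_sdot μ).const_mul _),
    integral_finsetSum _ fun l _ ↦ hSY l, integral_const_mul, integral_sdot, mul_zero, sub_zero]

end PoissonPi

open PoissonPi in
theorem expectation_Sdot_Z_general (m : ℕ) (μ : Fin m → ℝ≥0) :
    ∫ x : Fin m → ℕ, (∏ j, (x j : ℝ) - (∏ j, (μ j : ℝ)) * (1 + ∑ j, ((μ j : ℝ))⁻¹ * ((x j : ℝ) - (μ j : ℝ)))) * (∑ j, (∏ k ∈ univ.erase j, (x k : ℝ)) - (∏ j, (μ j : ℝ)) * ∑ j, ((μ j : ℝ))⁻¹) ∂(poissonPi μ)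
      = (∏ j, (μ j : ℝ)) * ∑ j, ∏ k ∈ univ.erase j, (1 + (μ k : ℝ)) - (∏ j, (μ j : ℝ)) ^ 2 * ((∑ j, ((μ j : ℝ))⁻¹) + (∑ j, ((μ j : ℝ))⁻¹) ^ 2 - (∑ j, ((μ j : ℝ))⁻¹ ^ 2)) := by
  change ∫ x, sdot μ x * zStat μ x ∂poissonPi μ = _
  simp_rw [integral_sdot_mul_zStat, integral_sdot_mul_prod_erase,
    prod_mul_prod_erase_eq_sq_mul_inv (fun k ↦ (μ k : ℝ)), sum_erase_eq_sub (mem_univ _)]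
  simp only [sum_sub_distrib, mul_add, mul_sub, sum_add_distrib, mul_assoc, ← sq, ← mul_sum,
    ← sum_mul]
  ring

theorem expectation_Sdot_Z (m : ℕ) (hm : 2 ≤ m) (μ : Fin m → ℝ≥0) (hμ : ∀ j, 0 < μ j) :
    ∫ x : Fin m → ℕ, (∏ j, (x j : ℝ) - (∏ j, (μ j : ℝ)) * (1 + ∑ j, ((μ j : ℝ))⁻¹ * ((x j : ℝ) - (μ j : ℝ)))) * (∑ j, (∏ k ∈ univ.erase j, (x k : ℝ)) - (∏ j, (μ j : ℝ)) * ∑ j, ((μ j : ℝ))⁻¹) ∂(poissonPi μ)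
      = (∏ j, (μ j : ℝ)) * ∑ j, ∏ k ∈ univ.erase j, (1 + (μ k : ℝ)) - (∏ j, (μ j : ℝ)) ^ 2 * ((∑ j, ((μ j : ℝ))⁻¹) + (∑ j, ((μ j : ℝ))⁻¹) ^ 2 - (∑ j, ((μ j : ℝ))⁻¹ ^ 2)) :=
  expectation_Sdot_Z_general m μ
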